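/- arXiv:2602.23289 — 2 statements merged into one kernel-verified Lean document; each statement's English description precedes it below -/
import Mathlib

section
/- Let a ≤ x ≤ b and c ≤ d with [c,d] ⊆ [a,b], d - x ≥ 12, and d - c ≤ (d - x)/3. Then d - c ≤ (b - a - 1)/2 - 1, and consequently, with φ(a,b) = 4 + 4·log₂(⌊b⌋ - ⌈a⌉ + 1) when ⌈a⌉ ≤ ⌊b⌋ and a < b, if c and d are integers then φ(c,d) ≤ φ(a,b) - 4. -/
noncomputable def phi (a b : ℝ) : ℝ :=
  if a = b ∨ (⌊b⌋ : ℤ) < ⌈a⌉ then 0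
  else 4 + 4 * Real.logb 2 ((⌊b⌋ : ℝ) - (⌈a⌉ : ℝ) + 1)

theorem small_step_potential_drop
    (a b c d x : ℝ)
    (hax : a ≤ x) (hxb : x ≤ b) (hcd : c ≤ d)
    (hac : a ≤ c) (hdb : d ≤ b)
    (hdx : d - x ≥ 12) (hstep : d - c ≤ (d - x) / 3) :
    d - c ≤ (b - a - 1) / 2 - 1 ∧
    ((⌈a⌉ : ℤ) ≤ ⌊b⌋ → a < b →
      (∃ m : ℤ, c = (m : ℝ)) → (∃ m : ℤ, d = (m : ℝ)) →
      phi c d ≤ phi a b - 4) := by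
  have h1 : d - c ≤ (b - a - 1) / 2 - 1 := by linarith
  refine ⟨h1, ?_⟩
  rintro hab hab' ⟨m, rfl⟩ ⟨n, rfl⟩
  have habR : ((⌈a⌉ : ℤ) : ℝ) ≤ ((⌊b⌋ : ℤ) : ℝ) := by exact_mod_cast hab
  have hN1 : (1 : ℝ) ≤ (⌊b⌋ : ℝ) - (⌈a⌉ : ℝ) + 1 := by linarith
  have hphiab : phi a b = 4 + 4 * Real.logb 2 ((⌊b⌋ : ℝ) - (⌈a⌉ : ℝ) + 1) := by
    unfold phi
    rw [if_neg]
    push_neg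
    exact ⟨ne_of_lt hab', hab⟩
  by_cases hmn : (m : ℝ) = n
  · have hz : phi m n = 0 := by unfold phi; rw [if_pos (Or.inl hmn)]
    rw [hz, hphiab]
    have hlog : 0 ≤ Real.logb 2 ((⌊b⌋ : ℝ) - (⌈a⌉ : ℝ) + 1) :=
      Real.logb_nonneg one_lt_two hN1
    linarith
  · have hmn' : (m : ℝ) < n := lt_of_le_of_ne hcd hmn
    have hmnZ : m < n := by exact_mod_cast hmn'
    have hmn1 : (m : ℝ) + 1 ≤ n := by exact_mod_cast hmnZ
    have hphicd : phi m n = 4 + 4 * Real.logb 2 ((n : ℝ) - (m : ℝ) + 1) := by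
      unfold phi
      rw [if_neg, Int.floor_intCast, Int.ceil_intCast]
      push_neg
      rw [Int.floor_intCast, Int.ceil_intCast]
      exact ⟨hmn, le_of_lt hmnZ⟩
    rw [hphicd, hphiab]
    have hfl : (⌊b⌋ : ℝ) > b - 1 := Int.sub_one_lt_floor b
    have hce : (⌈a⌉ : ℝ) < a + 1 := Int.ceil_lt_add_one a
    have hkey : 2 * ((n : ℝ) - m + 1) ≤ (⌊b⌋ : ℝ) - (⌈a⌉ : ℝ) + 1 := by linarith
    have hpos : (0 : ℝ) < (n : ℝ) - m + 1 := by linarith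
    have hlogmul : Real.logb 2 (2 * ((n : ℝ) - m + 1)) =
        1 + Real.logb 2 ((n : ℝ) - m + 1) := by
      rw [Real.logb_mul (by norm_num) (ne_of_gt hpos), Real.logb_self_eq_one] <;> norm_num
    have hle : Real.logb 2 (2 * ((n : ℝ) - m + 1)) ≤
        Real.logb 2 ((⌊b⌋ : ℝ) - (⌈a⌉ : ℝ) + 1) :=
      Real.logb_le_logb_of_le (by norm_num) (by linarith) hkey
    rw [hlogmul] at hle
    linarith
end

section
/- Let x be a real number and let I_1, …, I_k be closed intervals [a_i, b_i] each containing x, each interval being thought of as holding exactly m > 0 keys (values) inside its range, for a total of m·k keys all lying in [A, B] where A = min_i a_i and B = max_i b_i. Suppose these m·k keys are repartitioned into k output intervals J_1, …, J_k, each holding exactly m keys, ordered so that their interiors are pairwise disjoint, with each J_j equal to [min of its keys, max of its keys]. Then at least k of the output intervals intersect [A, B], and at most one output interval has left endpoint strictly less than A, at most one has right endpoint strictly greater than B, and at most one non-degenerate output interval contains x in its interior. Consequently at least k - 3 output intervals are subintervals of [A, x] or of [x, B]. -/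
theorem repartition_output_structure
    (k m : ℕ) (hk : 0 < k) (hm : 0 < m) (x : ℝ)
    (a b : Fin k → ℝ) (hax : ∀ i, a i ≤ x) (hxb : ∀ i, x ≤ b i)
    (A B : ℝ)
    (hA : IsLeast (Set.range a) A) (hB : IsGreatest (Set.range b) B)
    -- input keys: m keys per input interval, lying in that interval's range
    (keyIn : Fin k → Fin m → ℝ)
    (hkeyIn : ∀ i t, keyIn i t ∈ Set.Icc (a i) (b i))
    -- output keys: m keys per output group, groups consecutive in sorted order
    (keyOut : Fin k → Fin m → ℝ)
    (hperm : (Finset.univ : Finset (Fin k × Fin m)).val.map (fun p => keyIn p.1 p.2)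
           = (Finset.univ : Finset (Fin k × Fin m)).val.map (fun p => keyOut p.1 p.2))
    (hconsec : ∀ j j' : Fin k, j < j' → ∀ t t' : Fin m, keyOut j t ≤ keyOut j' t')
    -- output intervals span from min to max key of their group
    (c d : Fin k → ℝ)
    (hc : ∀ j, IsLeast (Set.range (keyOut j)) (c j))
    (hd : ∀ j, IsGreatest (Set.range (keyOut j)) (d j))
    (hdisj : ∀ j j' : Fin k, j ≠ j' →
      Disjoint (Set.Ioo (c j) (d j)) (Set.Ioo (c j') (d j'))) :
    (∀ j : Fin k, (Set.Icc (c j) (d j) ∩ Set.Icc A B).Nonempty) ∧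
    ((Finset.univ.filter (fun j : Fin k => c j < A)).card ≤ 1) ∧
    ((Finset.univ.filter (fun j : Fin k => B < d j)).card ≤ 1) ∧
    ((Finset.univ.filter (fun j : Fin k => c j < d j ∧ c j < x ∧ x < d j)).card ≤ 1) ∧
    (k - 3 ≤ (Finset.univ.filter (fun j : Fin k =>
        (A ≤ c j ∧ d j ≤ x) ∨ (x ≤ c j ∧ d j ≤ B))).card) := by
  have hAB : ∀ j t, A ≤ keyOut j t ∧ keyOut j t ≤ B := by
    intro j t
    have hmem : keyOut j t ∈ (Finset.univ : Finset (Fin k × Fin m)).val.map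
        (fun p => keyOut p.1 p.2) :=
      Multiset.mem_map.2 ⟨(j, t), Finset.mem_univ _, rfl⟩
    rw [← hperm] at hmem
    obtain ⟨p, -, hp⟩ := Multiset.mem_map.1 hmem
    have h1 := hkeyIn p.1 p.2
    have hA' := hA.2 (Set.mem_range_self p.1)
    have hB' := hB.2 (Set.mem_range_self p.1)
    rw [hp] at h1
    exact ⟨le_trans hA' h1.1, le_trans h1.2 hB'⟩
  have hcA : ∀ j, A ≤ c j := by
    intro j
    obtain ⟨t, ht⟩ := (hc j).1
    exact ht ▸ (hAB j t).1
  have hdB : ∀ j, d j ≤ B := by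
    intro j
    obtain ⟨t, ht⟩ := (hd j).1
    exact ht ▸ (hAB j t).2
  have hcd : ∀ j, c j ≤ d j := by
    intro j
    have t0 : Fin m := ⟨0, hm⟩
    exact le_trans ((hc j).2 (Set.mem_range_self t0)) ((hd j).2 (Set.mem_range_self t0))
  refine ⟨?_, ?_, ?_, ?_, ?_⟩
  · intro j
    exact ⟨c j, ⟨le_refl _, hcd j⟩, ⟨hcA j, le_trans (hcd j) (hdB j)⟩⟩
  · have : (Finset.univ.filter (fun j : Fin k => c j < A)) = ∅ :=
      Finset.filter_false_of_mem (fun j _ => not_lt.2 (hcA j))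
    simp [this]
  · have : (Finset.univ.filter (fun j : Fin k => B < d j)) = ∅ :=
      Finset.filter_false_of_mem (fun j _ => not_lt.2 (hdB j))
    simp [this]
  · apply Finset.card_le_one.2
    intro j hj j' hj'
    simp only [Finset.mem_filter] at hj hj'
    by_contra hne
    exact Set.disjoint_left.1 (hdisj j j' hne)
      ⟨hj.2.2.1, hj.2.2.2⟩ ⟨hj'.2.2.1, hj'.2.2.2⟩
  · have hsplit := Finset.card_filter_add_card_filter_not
      (s := (Finset.univ : Finset (Fin k)))
      (p := fun j : Fin k => (A ≤ c j ∧ d j ≤ x) ∨ (x ≤ c j ∧ d j ≤ B))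
    have hbad : (Finset.univ.filter
        (fun j : Fin k => ¬ ((A ≤ c j ∧ d j ≤ x) ∨ (x ≤ c j ∧ d j ≤ B)))).card ≤ 1 := by
      apply Finset.card_le_one.2
      intro j hj j' hj'
      simp only [Finset.mem_filter, not_or, not_and] at hj hj'
      have hx1 : x < d j := lt_of_not_ge (hj.2.1 (hcA j))
      have hx2 : c j < x := by
        by_contra h
        exact hj.2.2 (le_of_not_gt h) (hdB j)
      have hx1' : x < d j' := lt_of_not_ge (hj'.2.1 (hcA j'))
      have hx2' : c j' < x := by
        by_contra h
        exact hj'.2.2 (le_of_not_gt h) (hdB j')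
      by_contra hne
      exact Set.disjoint_left.1 (hdisj j j' hne) ⟨hx2, hx1⟩ ⟨hx2', hx1'⟩
    have hcardu : (Finset.univ : Finset (Fin k)).card = k := by simp
    omega
end
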